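/- Let U = [[A, B],[C, D]] : X ⊕ U → X^d ⊕ Y be a contractive colligation and set S(z) = D + C(I - Z(z)A)^{-1} Z(z)B for z in the open unit ball B^d of ℂ^d, where Z(z) : X^d → X is the row [z_1 I_X, ..., z_d I_X]. Then S(0) = D, and ‖S(z)‖ ≤ 1 for every z ∈ B^d. -/

import Mathlib

open scoped ENNReal
set_option synthInstance.maxHeartbeats 400000
set_option maxHeartbeats 1000000

instance PiLp.instCompleteSpace' {p : ℝ≥0∞} {ι : Type*} {β : ι → Type*}
    [∀ i, UniformSpace (β i)] [∀ i, CompleteSpace (β i)] : CompleteSpace (PiLp p β) :=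
  (PiLp.uniformEquiv p β).completeSpace_iff.2 (Pi.complete β)

/-- The row operator `Z(z) = [z₁ I_X, …, z_d I_X] : X^d → X`. -/
noncomputable def rowOp {X : Type*} [NormedAddCommGroup X] [NormedSpace ℂ X]
    {d : ℕ} (z : EuclideanSpace ℂ (Fin d)) : PiLp 2 (fun _ : Fin d => X) →L[ℂ] X :=
  ∑ j : Fin d, z j • ((ContinuousLinearMap.proj j : (∀ _ : Fin d, X) →L[ℂ] X).comp
      (PiLp.continuousLinearEquiv 2 ℂ (fun _ : Fin d => X)).toContinuousLinearMap)

/-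
The transfer function is the output of the system `x = Z(z)(A x + B u)`, `y = C x + D u`.
Since `‖Z(z)‖ ≤ ‖z‖ < 1`, the state satisfies `‖x‖ ≤ ‖A x + B u‖`, and contractivity of the
colligation then forces `‖C x + D u‖ ≤ ‖u‖`.
-/

section RowOperator

variable {X : Type*} [NormedAddCommGroup X] [NormedSpace ℂ X] {d : ℕ}

lemma rowOp_apply (z : EuclideanSpace ℂ (Fin d)) (v : PiLp 2 (fun _ : Fin d => X)) :
    rowOp z v = ∑ j, z j • v j := by
  simp [rowOp]

@[simp]
lemma rowOp_zero : rowOp (0 : EuclideanSpace ℂ (Fin d)) = (0 : PiLp 2 (fun _ => X) →L[ℂ] X) := by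
  simp [rowOp]

lemma norm_rowOp_le (z : EuclideanSpace ℂ (Fin d)) :
    ‖(rowOp z : PiLp 2 (fun _ : Fin d => X) →L[ℂ] X)‖ ≤ ‖z‖ := by
  refine ContinuousLinearMap.opNorm_le_bound _ (norm_nonneg z) fun v => ?_
  rw [rowOp_apply, PiLp.norm_eq_of_L2 z, PiLp.norm_eq_of_L2 v]
  calc ‖∑ j, z j • v j‖ ≤ ∑ j, ‖z j‖ * ‖v j‖ :=
        (norm_sum_le _ _).trans (Finset.sum_le_sum fun j _ => norm_smul_le _ _)
    _ ≤ √(∑ j, ‖z j‖ ^ 2) * √(∑ j, ‖v j‖ ^ 2) := Real.sum_mul_le_sqrt_mul_sqrt _ _ _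

end RowOperator

section Feedback

variable {V X : Type*} [NormedAddCommGroup V] [NormedSpace ℂ V]
  [NormedAddCommGroup X] [NormedSpace ℂ X]

lemma isUnit_one_sub_comp [CompleteSpace X] {Z : V →L[ℂ] X} {A : X →L[ℂ] V}
    (hZA : ‖Z‖ * ‖A‖ < 1) :
    IsUnit (1 - Z.comp A) :=
  (Units.oneSub (Z.comp A) ((Z.opNorm_comp_le A).trans_lt hZA)).isUnit

lemma inverse_one_sub_comp_apply_eq {Z : V →L[ℂ] X} {A : X →L[ℂ] V}
    (hu : IsUnit (1 - Z.comp A)) (w : V) :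
    Ring.inverse (1 - Z.comp A) (Z w) = Z (A (Ring.inverse (1 - Z.comp A) (Z w)) + w) := by
  set x := Ring.inverse (1 - Z.comp A) (Z w)
  have hx : x - Z (A x) = Z w :=
    congrArg (fun T : X →L[ℂ] X => T (Z w)) (Ring.mul_inverse_cancel _ hu)
  rw [map_add, ← hx, add_sub_cancel]

end Feedback

section Colligation

variable {X G Y V : Type*} [NormedAddCommGroup X] [NormedSpace ℂ X]
  [NormedAddCommGroup G] [NormedSpace ℂ G] [NormedAddCommGroup Y] [NormedSpace ℂ Y]
  [NormedAddCommGroup V] [NormedSpace ℂ V]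
  {A : X →L[ℂ] V} {B : G →L[ℂ] V} {C : X →L[ℂ] Y} {D : G →L[ℂ] Y}

lemma opNorm_le_one_of_contractive
    (hcontr : ∀ x u, ‖A x + B u‖ ^ 2 + ‖C x + D u‖ ^ 2 ≤ ‖x‖ ^ 2 + ‖u‖ ^ 2) : ‖A‖ ≤ 1 := by
  refine ContinuousLinearMap.opNorm_le_bound _ zero_le_one fun x => ?_
  have h := hcontr x 0
  simp only [map_zero, add_zero, norm_zero] at h
  rw [one_mul, ← sq_le_sq₀ (norm_nonneg _) (norm_nonneg _)]
  nlinarith [sq_nonneg ‖C x‖]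

lemma norm_output_le_of_feedback
    (hcontr : ∀ x u, ‖A x + B u‖ ^ 2 + ‖C x + D u‖ ^ 2 ≤ ‖x‖ ^ 2 + ‖u‖ ^ 2)
    {Z : V →L[ℂ] X} (hZ : ‖Z‖ ≤ 1) {x : X} {u : G} (hx : x = Z (A x + B u)) : ‖C x + D u‖ ≤ ‖u‖ := by
  have hstate : ‖x‖ ≤ ‖A x + B u‖ :=
    calc ‖x‖ = ‖Z (A x + B u)‖ := congrArg norm hx
      _ ≤ ‖Z‖ * ‖A x + B u‖ := Z.le_opNorm _
      _ ≤ ‖A x + B u‖ := mul_le_of_le_one_left (norm_nonneg _) hZ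
  rw [← sq_le_sq₀ (norm_nonneg _) (norm_nonneg _)]
  nlinarith [hcontr x u, pow_le_pow_left₀ (norm_nonneg x) hstate 2]

end Colligation

theorem contractive_colligation_schur_general
    {X G Y : Type*}
    [NormedAddCommGroup X] [InnerProductSpace ℂ X] [CompleteSpace X]
    [NormedAddCommGroup G] [InnerProductSpace ℂ G]
    [NormedAddCommGroup Y] [InnerProductSpace ℂ Y]
    {d : ℕ}
    (A : X →L[ℂ] PiLp 2 (fun _ : Fin d => X))
    (B : G →L[ℂ] PiLp 2 (fun _ : Fin d => X))
    (C : X →L[ℂ] Y) (D : G →L[ℂ] Y)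
    (hcontr : ∀ (x : X) (u : G),
      ‖A x + B u‖ ^ 2 + ‖C x + D u‖ ^ 2 ≤ ‖x‖ ^ 2 + ‖u‖ ^ 2)
    (S : EuclideanSpace ℂ (Fin d) → G →L[ℂ] Y)
    (hS : ∀ z : EuclideanSpace ℂ (Fin d),
      S z = D + ((C.comp (Ring.inverse (1 - (rowOp z).comp A))).comp (rowOp z)).comp B) :
    S 0 = D ∧ ∀ z : EuclideanSpace ℂ (Fin d), ‖z‖ < 1 → ‖S z‖ ≤ 1 := by
  refine ⟨by simp [hS 0], fun z hz => ?_⟩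
  have hZ : ‖(rowOp z : PiLp 2 (fun _ : Fin d => X) →L[ℂ] X)‖ ≤ 1 :=
    (norm_rowOp_le z).trans hz.le
  have hunit : IsUnit (1 - (rowOp z).comp A) := isUnit_one_sub_comp <|
    (mul_le_of_le_one_right (norm_nonneg _) (opNorm_le_one_of_contractive hcontr)).trans_lt
      ((norm_rowOp_le z).trans_lt hz)
  refine ContinuousLinearMap.opNorm_le_bound _ zero_le_one fun u => ?_
  rw [one_mul, hS z, add_apply, add_comm]
  exact norm_output_le_of_feedback hcontr hZ (inverse_one_sub_comp_apply_eq hunit (B u))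

/-- for a contractive colligation `[[A,B],[C,D]]` the transfer
function `S(z) = D + C(I - Z(z)A)⁻¹Z(z)B` satisfies `S(0) = D` and `‖S(z)‖ ≤ 1`
for every `z` in the open unit ball. -/
theorem contractive_colligation_schur
    {X G Y : Type*}
    [NormedAddCommGroup X] [InnerProductSpace ℂ X] [CompleteSpace X]
    [NormedAddCommGroup G] [InnerProductSpace ℂ G] [CompleteSpace G]
    [NormedAddCommGroup Y] [InnerProductSpace ℂ Y] [CompleteSpace Y]
    {d : ℕ} (hd : 1 ≤ d)
    (A : X →L[ℂ] PiLp 2 (fun _ : Fin d => X))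
    (B : G →L[ℂ] PiLp 2 (fun _ : Fin d => X))
    (C : X →L[ℂ] Y) (D : G →L[ℂ] Y)
    (hcontr : ∀ (x : X) (u : G),
      ‖A x + B u‖ ^ 2 + ‖C x + D u‖ ^ 2 ≤ ‖x‖ ^ 2 + ‖u‖ ^ 2)
    (S : EuclideanSpace ℂ (Fin d) → G →L[ℂ] Y)
    (hS : ∀ z : EuclideanSpace ℂ (Fin d),
      S z = D + ((C.comp (Ring.inverse (1 - (rowOp z).comp A))).comp (rowOp z)).comp B) :
    S 0 = D ∧ ∀ z : EuclideanSpace ℂ (Fin d), ‖z‖ < 1 → ‖S z‖ ≤ 1 :=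
  contractive_colligation_schur_general A B C D hcontr S hS
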